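/- For all ordinals x, y, t, u and natural numbers p, q, r with p > 0, the identity x + ω^r·y + t + ω^p·x + u + ω^q·y = ω^r·y + x + t + ω^p·x + u + ω^q·y holds for all transfinite ordinals. -/

import Mathlib

/-!
Writing `a = ω ^ s * (a / ω ^ s) + a % ω ^ s`, the remainder is absorbed by any `c ≥ ω ^ s`, so
`a + (b + c) = ω ^ s * (a / ω ^ s + b / ω ^ s) + c`: the first two summands commute in front of
`c` as soon as their quotients by `ω ^ s` do, e.g. when one quotient is `0` or both are finite.
With `e = log ω x`, take `s = e` if the leading exponent `r + log ω y` of `ω ^ r * y` is at most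
`e`, and `s = e + 1` otherwise; in the latter case `ω ^ (e + 1)` lies below `ω ^ p * x` (`e`
finite, `p > 0`) or below `y` (`e` infinite), hence below the tail
`t + ω ^ p * x + u + ω ^ q * y`.
-/

open Ordinal

namespace Ordinal

theorem add_eq_opow_mul_div_add {a c s : Ordinal} (hc : ω ^ s ≤ c) :
    a + c = ω ^ s * (a / ω ^ s) + c := by
  conv_lhs => rw [← div_add_mod a (ω ^ s), add_assoc,
    add_of_omega0_opow_le (mod_lt a (opow_ne_zero s omega0_ne_zero)) hc]

theorem add_add_eq_opow_mul_add {a b c s : Ordinal} (hc : ω ^ s ≤ c) :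
    a + (b + c) = ω ^ s * (a / ω ^ s + b / ω ^ s) + c := by
  rw [add_eq_opow_mul_div_add (hc.trans le_add_self), add_eq_opow_mul_div_add hc (a := b),
    ← add_assoc, ← mul_add]

theorem add_left_comm_of_div_add_comm {a b c s : Ordinal} (hc : ω ^ s ≤ c)
    (h : a / ω ^ s + b / ω ^ s = b / ω ^ s + a / ω ^ s) : a + (b + c) = b + (a + c) := by
  rw [add_add_eq_opow_mul_add hc, h, ← add_add_eq_opow_mul_add hc]

theorem add_left_comm_of_lt_opow {a b c s : Ordinal} (hab : a < ω ^ s ∨ b < ω ^ s)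
    (hc : ω ^ s ≤ c) : a + (b + c) = b + (a + c) := by
  refine add_left_comm_of_div_add_comm hc ?_
  rcases hab with h | h <;> rw [div_eq_zero_of_lt h, add_zero, zero_add]

theorem div_opow_lt_omega0_of_lt_opow_add_one {a s : Ordinal} (ha : a < ω ^ (s + 1)) :
    a / ω ^ s < ω := by
  rwa [← lt_mul_iff_div_lt (opow_ne_zero s omega0_ne_zero), ← opow_succ, Order.succ_eq_add_one]

theorem add_left_comm_of_lt_opow_add_one {a b c s : Ordinal} (ha : a < ω ^ (s + 1))
    (hb : b < ω ^ (s + 1)) (hc : ω ^ s ≤ c) : a + (b + c) = b + (a + c) := by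
  refine add_left_comm_of_div_add_comm hc ?_
  obtain ⟨m, hm⟩ := lt_omega0.1 (div_opow_lt_omega0_of_lt_opow_add_one ha)
  obtain ⟨n, hn⟩ := lt_omega0.1 (div_opow_lt_omega0_of_lt_opow_add_one hb)
  rw [hm, hn, ← Nat.cast_add, ← Nat.cast_add, Nat.add_comm]

theorem opow_log_add_one_le_opow_mul {p x : Ordinal} (hp : 0 < p) (hx : x ≠ 0)
    (hlog : log ω x < ω) : ω ^ (log ω x + 1) ≤ ω ^ p * x := by
  obtain ⟨n, hn⟩ := lt_omega0.1 hlog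
  calc ω ^ (log ω x + 1) = ω ^ (1 + log ω x) := by
        rw [hn, ← Nat.cast_one, ← Nat.cast_add, ← Nat.cast_add, Nat.add_comm]
    _ = ω ^ (1 : Ordinal) * ω ^ log ω x := opow_add _ _ _
    _ ≤ ω ^ p * x := mul_le_mul' (opow_le_opow_right omega0_pos (Order.one_le_iff_pos.2 hp))
        (opow_log_le_self ω hx)

theorem opow_add_one_le_of_lt_natCast_add_log {e y : Ordinal} {r : ℕ} (he : ω ≤ e)
    (hlt : e < r + log ω y) : ω ^ (e + 1) ≤ y := by
  have hlog : ω ≤ log ω y := by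
    by_contra! hfin
    obtain ⟨n, hn⟩ := lt_omega0.1 hfin
    rw [hn, ← Nat.cast_add] at hlt
    exact (he.trans hlt.le).not_gt (natCast_lt_omega0 _)
  rw [natCast_add_of_omega0_le hlog] at hlt
  have hy : y ≠ 0 := by
    rintro rfl
    exact omega0_ne_zero (le_zero_iff.1 (hlog.trans_eq (log_zero_right ω)))
  calc ω ^ (e + 1) ≤ ω ^ log ω y :=
        opow_le_opow_right omega0_pos (by rwa [← Order.succ_eq_add_one, Order.succ_le_iff])
    _ ≤ y := opow_log_le_self ω hy

end Ordinal

theorem hidden_old_variable1 (x y t u : Ordinal) (p q r : ℕ) (hp : 0 < p) :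
    x + ω ^ (r : Ordinal) * y + t + ω ^ (p : Ordinal) * x + u + ω ^ (q : Ordinal) * y
      = ω ^ (r : Ordinal) * y + x + t + ω ^ (p : Ordinal) * x + u + ω ^ (q : Ordinal) * y := by
  rcases eq_or_ne x 0 with rfl | hx
  · simp
  simp only [add_assoc]
  set c := t + (ω ^ (p : Ordinal) * x + (u + ω ^ (q : Ordinal) * y))
  have hxc : ω ^ (p : Ordinal) * x ≤ c := le_self_add.trans le_add_self
  have hyc : ω ^ (q : Ordinal) * y ≤ c := le_add_self.trans (le_add_self.trans le_add_self)
  have hx_lt : x < ω ^ (log ω x + 1) := by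
    rw [← Order.succ_eq_add_one]; exact lt_opow_succ_log_self one_lt_omega0 x
  have hw_lt : ω ^ (r : Ordinal) * y < ω ^ (r + log ω y + 1) := by
    rw [add_assoc, opow_add, ← Order.succ_eq_add_one]
    exact mul_lt_mul_of_pos_left (lt_opow_succ_log_self one_lt_omega0 y) (opow_pos _ omega0_pos)
  rcases le_or_gt ((r : Ordinal) + log ω y) (log ω x) with hle | hlt
  · refine add_left_comm_of_lt_opow_add_one hx_lt
      (hw_lt.trans_le (opow_le_opow_right omega0_pos (add_le_add_left hle 1))) ?_
    exact (opow_log_le_self ω hx).trans ((le_mul_right x (opow_pos _ omega0_pos)).trans hxc)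
  · refine add_left_comm_of_lt_opow (Or.inl hx_lt) ?_
    rcases lt_or_ge (log ω x) ω with hfin | hinf
    · exact (opow_log_add_one_le_opow_mul (by exact_mod_cast hp) hx hfin).trans hxc
    · exact (opow_add_one_le_of_lt_natCast_add_log hinf hlt).trans
        ((le_mul_right y (opow_pos _ omega0_pos)).trans hyc)
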